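/- For 0 < ε with 4ε² < ζ, let γ_1 be the uniform distribution on [−ε, ε] and γ_2 the uniform distribution on [D r − ε, D r + ε] for D r > 0. Then the squared MMD with respect to the Gaussian kernel g_ζ(x,y) = exp(−(x−y)²/ζ) satisfies ρ²(γ_1, γ_2) ≥ e^{−1} − 2·exp(−((D−1)r − 2ε)²/ζ). In particular, for fixed r, ε, ζ, ρ²(γ_1, γ_2) ≥ 1/(2e) for all D sufficiently large. -/
import Mathlib

open MeasureTheory Real

/-- Squared MMD (w.r.t. the Gaussian kernel of bandwidth `ζ`) between the uniform
distributions on the intervals `[a₁, a₂]` and `[b₁, b₂]`, written via double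
integrals against the uniform densities. -/
noncomputable def unifMMD2 (ζ a₁ a₂ b₁ b₂ : ℝ) : ℝ :=
  (1 / ((a₂ - a₁) * (a₂ - a₁))) *
      ∫ x in Set.Icc a₁ a₂, ∫ y in Set.Icc a₁ a₂, Real.exp (-(x - y) ^ 2 / ζ)
    + (1 / ((b₂ - b₁) * (b₂ - b₁))) *
        ∫ x in Set.Icc b₁ b₂, ∫ y in Set.Icc b₁ b₂, Real.exp (-(x - y) ^ 2 / ζ)
    - 2 * ((1 / ((a₂ - a₁) * (b₂ - b₁))) *
        ∫ x in Set.Icc a₁ a₂, ∫ y in Set.Icc b₁ b₂, Real.exp (-(x - y) ^ 2 / ζ))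

/-- Averaging over a window of fixed width preserves the "even unimodal" property. -/
lemma aux_unimodal_avg (φ : ℝ → ℝ) (hc : Continuous φ)
    (hP : ∀ a b : ℝ, |a| ≤ |b| → φ b ≤ φ a) (ε : ℝ) (hε : 0 < ε) :
    ∀ a b : ℝ, |a| ≤ |b| →
      (∫ u in (b - ε)..(b + ε), φ u) ≤ ∫ u in (a - ε)..(a + ε), φ u := by
  have hint : ∀ a b : ℝ, IntervalIntegrable φ volume a b := fun a b =>
    hc.intervalIntegrable a b
  have hint2 : ∀ a b : ℝ, IntervalIntegrable (fun x => φ (x - 2 * ε)) volume a b := fun a b =>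
    (hc.comp (by continuity)).intervalIntegrable a b
  have heven : ∀ x : ℝ, φ (-x) = φ x := fun x =>
    le_antisymm (hP x (-x) (by simp)) (hP (-x) x (by simp))
  have hpsi_even : ∀ s : ℝ, (∫ u in (-s - ε)..(-s + ε), φ u) = ∫ u in (s - ε)..(s + ε), φ u := by
    intro s
    have h1 : (∫ u in (s - ε)..(s + ε), φ (-u)) = ∫ u in (-(s + ε))..(-(s - ε)), φ u :=
      intervalIntegral.integral_comp_neg φ
    simp only [heven] at h1
    rw [h1]
    congr 1 <;> ring
  have hmono : ∀ p q : ℝ, 0 ≤ p → p ≤ q →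
      (∫ u in (q - ε)..(q + ε), φ u) ≤ ∫ u in (p - ε)..(p + ε), φ u := by
    intro p q hp hpq
    have key : (∫ u in (p + ε)..(q + ε), φ u) ≤ ∫ u in (p - ε)..(q - ε), φ u := by
      have hshift : (∫ u in (p + ε)..(q + ε), φ (u - 2 * ε)) = ∫ u in (p - ε)..(q - ε), φ u := by
        rw [intervalIntegral.integral_comp_sub_right φ (2 * ε)]
        congr 1 <;> ring
      rw [← hshift]
      refine intervalIntegral.integral_mono_on (by linarith) (hint _ _) (hint2 _ _) ?_
      intro x hx
      refine hP (x - 2 * ε) x ?_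
      have hx1 : ε ≤ x := by
        have := hx.1; linarith
      rw [abs_of_nonneg (by linarith : (0:ℝ) ≤ x), abs_le]
      constructor <;> linarith
    have e1 : (∫ u in (p - ε)..(q - ε), φ u) + ∫ u in (q - ε)..(q + ε), φ u
        = ∫ u in (p - ε)..(q + ε), φ u :=
      intervalIntegral.integral_add_adjacent_intervals (hint _ _) (hint _ _)
    have e2 : (∫ u in (p - ε)..(p + ε), φ u) + ∫ u in (p + ε)..(q + ε), φ u
        = ∫ u in (p - ε)..(q + ε), φ u :=
      intervalIntegral.integral_add_adjacent_intervals (hint _ _) (hint _ _)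
    linarith
  intro a b hab
  have ha : (∫ u in (a - ε)..(a + ε), φ u) = ∫ u in (|a| - ε)..(|a| + ε), φ u := by
    rcases abs_cases a with ⟨h1, _⟩ | ⟨h1, _⟩
    · rw [h1]
    · rw [h1]
      exact (hpsi_even a).symm
  have hb : (∫ u in (b - ε)..(b + ε), φ u) = ∫ u in (|b| - ε)..(|b| + ε), φ u := by
    rcases abs_cases b with ⟨h1, _⟩ | ⟨h1, _⟩
    · rw [h1]
    · rw [h1]
      exact (hpsi_even b).symm
  rw [ha, hb]
  exact hmono |a| |b| (abs_nonneg a) hab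

set_option maxHeartbeats 1000000 in
/-- MMD separation for the impossibility construction: with `γ₁ = U([−ε, ε])` and
`γ₂ = U([Dr−ε, Dr+ε])` and `4ε² < ζ`, one has
`ρ²(γ₁, γ₂) ≥ e⁻¹ − 2·exp(−((D−1)r − 2ε)²/ζ)`; in particular `ρ²(γ₁, γ₂) ≥ 1/(2e)`
for all sufficiently large `D`. -/
theorem stmt_12 (ζ ε r : ℝ) (hζ : 0 < ζ) (hε : 0 < ε) (hεζ : 4 * ε ^ 2 < ζ) (hr : 0 < r) :
    (∀ D : ℝ, 1 ≤ D →
        unifMMD2 ζ (-ε) ε (D * r - ε) (D * r + ε)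
          ≥ Real.exp (-1) - 2 * Real.exp (-((D - 1) * r - 2 * ε) ^ 2 / ζ)) ∧
      ∃ D₀ : ℝ, ∀ D ≥ D₀,
        unifMMD2 ζ (-ε) ε (D * r - ε) (D * r + ε) ≥ 1 / (2 * Real.exp 1) := by
  -- the Gaussian kernel
  set k : ℝ → ℝ := fun u => Real.exp (-u ^ 2 / ζ) with hk
  have hkapp : ∀ u : ℝ, k u = Real.exp (-u ^ 2 / ζ) := fun u => rfl
  have hkc : Continuous k := by
    rw [hk]
    exact Real.continuous_exp.comp ((((continuous_pow 2).neg).div_const ζ))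
  have hkP : ∀ a b : ℝ, |a| ≤ |b| → k b ≤ k a := by
    intro a b h
    have h2 : a ^ 2 ≤ b ^ 2 := by
      nlinarith [mul_self_le_mul_self (abs_nonneg a) h, sq_abs a, sq_abs b]
    rw [hkapp, hkapp]
    apply Real.exp_le_exp.mpr
    rw [neg_div, neg_div]
    exact neg_le_neg (by gcongr)
  have hexpc : ∀ x : ℝ, Continuous fun y : ℝ => Real.exp (-(x - y) ^ 2 / ζ) := fun x =>
    Real.continuous_exp.comp ((((continuous_const.sub continuous_id).pow 2).neg).div_const ζ)
  -- the window average of the kernel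
  set H : ℝ → ℝ := fun s => ∫ u in (s - ε)..(s + ε), k u with hH
  have hHapp : ∀ s : ℝ, H s = ∫ u in (s - ε)..(s + ε), k u := fun s => rfl
  have hHP : ∀ a b : ℝ, |a| ≤ |b| → H b ≤ H a := aux_unimodal_avg k hkc hkP ε hε
  have hHc : Continuous H := by
    have h1 : ∀ a b : ℝ, IntervalIntegrable k volume a b := fun a b => hkc.intervalIntegrable a b
    have h2 : Continuous fun x : ℝ => ∫ u in (0:ℝ)..x, k u :=
      intervalIntegral.continuous_primitive h1 0
    have h3 : H = fun s => (∫ u in (0:ℝ)..(s + ε), k u) - ∫ u in (0:ℝ)..(s - ε), k u := by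
      funext s
      rw [hHapp]
      exact (intervalIntegral.integral_interval_sub_left (h1 _ _) (h1 _ _)).symm
    rw [h3]
    exact (h2.comp (by continuity)).sub (h2.comp (by continuity))
  have hHint : ∀ a b : ℝ, IntervalIntegrable H volume a b := fun a b => hHc.intervalIntegrable a b
  -- conversion Icc → interval integral
  have icc_eq : ∀ (a b : ℝ), a ≤ b → ∀ f : ℝ → ℝ,
      (∫ x in Set.Icc a b, f x) = ∫ x in a..b, f x := by
    intro a b hab f
    rw [MeasureTheory.integral_Icc_eq_integral_Ioc, intervalIntegral.integral_of_le hab]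
  -- inner kernel integral over a window
  have iexp : ∀ (x p : ℝ), (∫ y in (p - ε)..(p + ε), Real.exp (-(x - y) ^ 2 / ζ)) = H (x - p) := by
    intro x p
    have h1 : (∫ y in (p - ε)..(p + ε), Real.exp (-(x - y) ^ 2 / ζ))
        = ∫ y in (p - ε)..(p + ε), k (x - y) := by
      simp only [hkapp]
    rw [h1, intervalIntegral.integral_comp_sub_left k x, hHapp]
    congr 1 <;> ring
  -- interval integral of (f ± const)
  have hsub : ∀ (a b : ℝ) (f : ℝ → ℝ), Continuous f → ∀ cst : ℝ,
      (∫ x in a..b, (f x - cst)) = (∫ x in a..b, f x) - (b - a) * cst := by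
    intro a b f hf cst
    have h1 := intervalIntegral.integral_sub (μ := volume) (a := a) (b := b)
      (f := f) (g := fun _ => cst) (hf.intervalIntegrable a b) intervalIntegrable_const
    simp only [intervalIntegral.integral_const, smul_eq_mul] at h1
    exact h1
  have hadd : ∀ (a b : ℝ) (f : ℝ → ℝ), Continuous f → ∀ cst : ℝ,
      (∫ x in a..b, (f x + cst)) = (∫ x in a..b, f x) + (b - a) * cst := by
    intro a b f hf cst
    have h1 := intervalIntegral.integral_add (μ := volume) (a := a) (b := b)
      (f := f) (g := fun _ => cst) (hf.intervalIntegrable a b) intervalIntegrable_const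
    simp only [intervalIntegral.integral_const, smul_eq_mul] at h1
    exact h1
  -- lower bound for H on [-ε, ε]
  have hHlb : ∀ x ∈ Set.Icc (-ε) ε, 2 * ε * Real.exp (-1) ≤ H x := by
    intro x hx
    obtain ⟨hx1, hx2⟩ := hx
    have hle : (∫ _u in (x - ε)..(x + ε), Real.exp (-1)) ≤ ∫ u in (x - ε)..(x + ε), k u := by
      refine intervalIntegral.integral_mono_on (by linarith)
        (continuous_const.intervalIntegrable _ _) (hkc.intervalIntegrable _ _) ?_
      intro u hu
      obtain ⟨hu1, hu2⟩ := hu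
      rw [hkapp]
      apply Real.exp_le_exp.mpr
      have h1 : u ^ 2 ≤ ζ := by
        nlinarith [mul_nonneg (by linarith : (0:ℝ) ≤ 2 * ε - u) (by linarith : (0:ℝ) ≤ 2 * ε + u)]
      rw [neg_div]
      exact neg_le_neg ((div_le_one hζ).mpr h1)
    rw [intervalIntegral.integral_const, smul_eq_mul] at hle
    have h2 : (x + ε - (x - ε)) * Real.exp (-1) = 2 * ε * Real.exp (-1) := by ring
    rw [h2] at hle
    rw [hHapp]
    exact hle
  -- main inequality
  have hmain : ∀ D : ℝ, 1 ≤ D →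
      unifMMD2 ζ (-ε) ε (D * r - ε) (D * r + ε)
        ≥ Real.exp (-1) - 2 * Real.exp (-((D - 1) * r - 2 * ε) ^ 2 / ζ) := by
    intro D hD
    set t := D * r with htdef
    set c := (D - 1) * r - 2 * ε with hcdef
    set E := Real.exp (-c ^ 2 / ζ) with hEdef
    have hBle : t - ε ≤ t + ε := by linarith
    have hAle : -ε ≤ ε := by linarith
    -- inner integrals over the two windows (as functions of x)
    have iA' : ∀ x : ℝ, (∫ y in (-ε)..ε, Real.exp (-(x - y) ^ 2 / ζ)) = H x := by
      intro x
      have h1 : (∫ y in (-ε)..ε, Real.exp (-(x - y) ^ 2 / ζ))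
          = ∫ y in (0 - ε)..(0 + ε), Real.exp (-(x - y) ^ 2 / ζ) := by
        congr 1 <;> ring
      rw [h1, iexp x 0, sub_zero]
    have iA : ∀ x : ℝ, (∫ y in Set.Icc (-ε) ε, Real.exp (-(x - y) ^ 2 / ζ)) = H x := by
      intro x
      rw [icc_eq _ _ hAle, iA' x]
    have iB : ∀ x : ℝ, (∫ y in Set.Icc (t - ε) (t + ε), Real.exp (-(x - y) ^ 2 / ζ))
        = H (x - t) := by
      intro x
      rw [icc_eq _ _ hBle, iexp x t]
    -- cross double integral
    have o3 : (∫ x in Set.Icc (-ε) ε, ∫ y in Set.Icc (t - ε) (t + ε),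
          Real.exp (-(x - y) ^ 2 / ζ)) = ∫ x in (-ε - t)..(ε - t), H x := by
      rw [icc_eq _ _ hAle]
      have h1 : (∫ x in (-ε)..ε, ∫ y in Set.Icc (t - ε) (t + ε), Real.exp (-(x - y) ^ 2 / ζ))
          = ∫ x in (-ε)..ε, H (x - t) :=
        intervalIntegral.integral_congr fun x _ => iB x
      rw [h1, intervalIntegral.integral_comp_sub_right H t]
    -- the B-level double integral with a subtracted constant
    have hB : ∀ cst : ℝ, (∫ x in Set.Icc (t - ε) (t + ε), ∫ y in Set.Icc (t - ε) (t + ε),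
          (Real.exp (-(x - y) ^ 2 / ζ) - cst))
        = (∫ x in (-ε)..ε, H x) - 2 * ε * (2 * ε * cst) := by
      intro cst
      have inner : ∀ x : ℝ, (∫ y in Set.Icc (t - ε) (t + ε),
          (Real.exp (-(x - y) ^ 2 / ζ) - cst)) = H (x - t) - 2 * ε * cst := by
        intro x
        rw [icc_eq _ _ hBle]
        have h2 := hsub (t - ε) (t + ε) (fun y => Real.exp (-(x - y) ^ 2 / ζ)) (hexpc x) cst
        rw [iexp x t] at h2
        have h3 : t + ε - (t - ε) = 2 * ε := by ring
        rw [h3] at h2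
        exact h2
      have step1 : (∫ x in Set.Icc (t - ε) (t + ε), ∫ y in Set.Icc (t - ε) (t + ε),
            (Real.exp (-(x - y) ^ 2 / ζ) - cst))
          = ∫ x in (t - ε)..(t + ε), (H (x - t) - 2 * ε * cst) := by
        rw [icc_eq _ _ hBle]
        exact intervalIntegral.integral_congr fun x _ => inner x
      have step2 := hsub (t - ε) (t + ε) (fun x => H (x - t))
        (hHc.comp (continuous_id.sub continuous_const)) (2 * ε * cst)
      have h3 : t + ε - (t - ε) = 2 * ε := by ring
      rw [h3] at step2
      have step3 : (∫ x in (t - ε)..(t + ε), H (x - t)) = ∫ x in (-ε)..ε, H x := by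
        rw [intervalIntegral.integral_comp_sub_right H t]
        congr 1 <;> ring
      rw [step1, step2, step3]
    -- the A-level double integral with an added constant
    have hA : ∀ cst : ℝ, (∫ x in Set.Icc (-ε) ε, ∫ y in Set.Icc (-ε) ε,
          (Real.exp (-(x - y) ^ 2 / ζ) + cst))
        = (∫ x in (-ε)..ε, H x) + 2 * ε * (2 * ε * cst) := by
      intro cst
      have inner : ∀ x : ℝ, (∫ y in Set.Icc (-ε) ε,
          (Real.exp (-(x - y) ^ 2 / ζ) + cst)) = H x + 2 * ε * cst := by
        intro x
        rw [icc_eq _ _ hAle]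
        have h2 := hadd (-ε) ε (fun y => Real.exp (-(x - y) ^ 2 / ζ)) (hexpc x) cst
        rw [iA' x] at h2
        have h3 : ε - -ε = 2 * ε := by ring
        rw [h3] at h2
        exact h2
      have step1 : (∫ x in Set.Icc (-ε) ε, ∫ y in Set.Icc (-ε) ε,
            (Real.exp (-(x - y) ^ 2 / ζ) + cst))
          = ∫ x in (-ε)..ε, (H x + 2 * ε * cst) := by
        rw [icc_eq _ _ hAle]
        exact intervalIntegral.integral_congr fun x _ => inner x
      have step2 := hadd (-ε) ε H hHc (2 * ε * cst)
      have h3 : ε - -ε = 2 * ε := by ring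
      rw [h3] at step2
      rw [step1, step2]
    -- the closed form of the MMD
    have hEq : unifMMD2 ζ (-ε) ε (t - ε) (t + ε)
        = (2 * (∫ x in (-ε)..ε, H x) - 2 * ∫ x in (-ε - t)..(ε - t), H x) / (4 * ε ^ 2) := by
      rw [unifMMD2, o3, hB, hA]
      have h4 : ε - -ε = 2 * ε := by ring
      have h5 : t + ε - (t - ε) = 2 * ε := by ring
      rw [h4, h5]
      field_simp
      ring
    rw [hEq, ge_iff_le, le_div_iff₀ (by positivity : (0:ℝ) < 4 * ε ^ 2)]
    set P := ∫ x in (-ε)..ε, H x with hPdef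
    set Q := ∫ x in (-ε - t)..(ε - t), H x with hQdef
    have hEpos : 0 < E := hEdef ▸ Real.exp_pos _
    -- nonnegativity: Q ≤ P
    have hQP : Q ≤ P := by
      have h0 := aux_unimodal_avg H hHc hHP ε hε 0 (-t) (by simp)
      have e1 : -t - ε = -ε - t := by ring
      have e2 : -t + ε = ε - t := by ring
      have e3 : (0:ℝ) - ε = -ε := by ring
      have e4 : (0:ℝ) + ε = ε := by ring
      rw [e1, e2, e3, e4] at h0
      rw [hPdef, hQdef]
      exact h0
    have hPlb : 2 * ε * (2 * ε * Real.exp (-1)) ≤ P := by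
      have h1 : (∫ _x in (-ε)..ε, 2 * ε * Real.exp (-1)) ≤ P := by
        rw [hPdef]
        exact intervalIntegral.integral_mono_on hAle
          (continuous_const.intervalIntegrable _ _) (hHint _ _) hHlb
      rw [intervalIntegral.integral_const, smul_eq_mul] at h1
      have h2 : (ε - -ε) * (2 * ε * Real.exp (-1)) = 2 * ε * (2 * ε * Real.exp (-1)) := by ring
      rw [h2] at h1
      exact h1
    rcases le_or_gt (Real.exp (-1)) (2 * E) with hcase | hcase
    · nlinarith [mul_nonneg (by linarith : (0:ℝ) ≤ 2 * E - Real.exp (-1))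
        (by positivity : (0:ℝ) ≤ 4 * ε ^ 2)]
    · -- here 2ε < c
      have hc2 : ζ < c ^ 2 := by
        by_contra hcon
        push_neg at hcon
        have h5 : (-1:ℝ) ≤ -c ^ 2 / ζ := by
          rw [neg_div]
          exact neg_le_neg ((div_le_one hζ).mpr hcon)
        have h6 := Real.exp_le_exp.mpr h5
        rw [← hEdef] at h6
        linarith
      have hcge : -(2 * ε) ≤ c := by
        rw [hcdef]
        nlinarith [mul_nonneg (by linarith : (0:ℝ) ≤ D - 1) hr.le]
      have hcpos : 2 * ε < c := by
        by_contra hcon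
        push_neg at hcon
        nlinarith [mul_nonneg (by linarith : (0:ℝ) ≤ 2 * ε - c)
          (by linarith : (0:ℝ) ≤ 2 * ε + c)]
      -- upper bound for H on [-ε - t, ε - t]
      have htc : c + r = t - 2 * ε := by rw [hcdef, htdef]; ring
      have hHub : ∀ x ∈ Set.Icc (-ε - t) (ε - t), H x ≤ 2 * ε * E := by
        intro x hx
        obtain ⟨hx1, hx2⟩ := hx
        have hle : (∫ u in (x - ε)..(x + ε), k u) ≤ ∫ _u in (x - ε)..(x + ε), E := by
          refine intervalIntegral.integral_mono_on (by linarith)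
            (hkc.intervalIntegrable _ _) (continuous_const.intervalIntegrable _ _) ?_
          intro u hu
          obtain ⟨hu1, hu2⟩ := hu
          have h3 : c ≤ -u := by linarith
          have h4 : c ^ 2 ≤ u ^ 2 := by nlinarith
          rw [hkapp, hEdef]
          apply Real.exp_le_exp.mpr
          rw [neg_div, neg_div]
          exact neg_le_neg (by gcongr)
        rw [intervalIntegral.integral_const, smul_eq_mul] at hle
        have h2 : (x + ε - (x - ε)) * E = 2 * ε * E := by ring
        rw [h2] at hle
        rw [hHapp]
        exact hle
      have hQub : Q ≤ 2 * ε * (2 * ε * E) := by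
        have h1 : Q ≤ ∫ _x in (-ε - t)..(ε - t), 2 * ε * E := by
          rw [hQdef]
          exact intervalIntegral.integral_mono_on (by linarith)
            (hHint _ _) (continuous_const.intervalIntegrable _ _) hHub
        rw [intervalIntegral.integral_const, smul_eq_mul] at h1
        have h2 : (ε - t - (-ε - t)) * (2 * ε * E) = 2 * ε * (2 * ε * E) := by ring
        rw [h2] at h1
        exact h1
      nlinarith [Real.exp_pos (-1), mul_pos hε hε, hEpos.le]
  refine ⟨hmain, ⟨1 + (2 * ε + Real.sqrt (3 * ζ)) / r, ?_⟩⟩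
  intro D hD
  have hsq : 0 ≤ Real.sqrt (3 * ζ) := Real.sqrt_nonneg _
  have hD1 : 1 ≤ D := by
    have h0 : 0 < (2 * ε + Real.sqrt (3 * ζ)) / r := by positivity
    linarith
  have hclb : Real.sqrt (3 * ζ) ≤ (D - 1) * r - 2 * ε := by
    have h1 : (2 * ε + Real.sqrt (3 * ζ)) / r * r = 2 * ε + Real.sqrt (3 * ζ) := by
      field_simp
    have h2 : (2 * ε + Real.sqrt (3 * ζ)) / r ≤ D - 1 := by linarith
    have h3 : (2 * ε + Real.sqrt (3 * ζ)) / r * r ≤ (D - 1) * r :=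
      mul_le_mul_of_nonneg_right h2 hr.le
    rw [h1] at h3
    linarith
  have hc2 : 3 * ζ ≤ ((D - 1) * r - 2 * ε) ^ 2 := by
    have h0 := Real.sq_sqrt (by positivity : (0:ℝ) ≤ 3 * ζ)
    nlinarith
  have hEub : Real.exp (-((D - 1) * r - 2 * ε) ^ 2 / ζ) ≤ Real.exp (-3) := by
    apply Real.exp_le_exp.mpr
    rw [neg_div, neg_le_neg_iff, le_div_iff₀ hζ]
    linarith
  have h1 := hmain D hD1
  have hnum : 1 / (2 * Real.exp 1) ≤ Real.exp (-1) - 2 * Real.exp (-3) := by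
    have hpos : 0 < Real.exp 1 := Real.exp_pos 1
    have hb : 0 < Real.exp (-3) := Real.exp_pos _
    have he : (2.7182818283 : ℝ) < Real.exp 1 := Real.exp_one_gt_d9
    have h8 : Real.exp (-1) * Real.exp 1 = 1 := by
      rw [← Real.exp_add]; norm_num
    have h10 : Real.exp (-3) * (Real.exp 1 * (Real.exp 1 * Real.exp 1)) = 1 := by
      rw [← Real.exp_add, ← Real.exp_add, ← Real.exp_add]; norm_num
    have hsq4 : (0:ℝ) ≤ Real.exp 1 * Real.exp 1 - 4 := by nlinarith
    rw [div_le_iff₀ (by positivity : (0:ℝ) < 2 * Real.exp 1)]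
    nlinarith [mul_nonneg (mul_pos hb hpos).le hsq4, mul_pos hb hpos]
  linarith
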